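/- arXiv:1912.09933 — 8 statements merged into one kernel-verified Lean document; each statement's English description precedes it below -/
import Mathlib

section
/- Let A be a finite set of players with at least two elements and let v be a nondecreasing coalitional value function on A with v(C) = 0 whenever C has at most one element. Let ε* ∈ ℝ be the least-core value of v, i.e., K(v,ε*) ≠ ∅ and K(v,ε) = ∅ for every ε < ε*. Then every allocation β in the least-core K(v,ε*) satisfies β_a ≥ 0 for all a ∈ A. -/
/-!
If `β` lies in the least-core and `β a < 0`, then `-β a ≤ ε*` because of the singleton `{a}`,
so `ε* > 0`. Take `η = -β a / n` from every player and give the total `n η` to `a`. A coalition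
containing `a` (other than `A`) gains at least `η`; a coalition `C` without `a` loses at most
`(n - 1) η`, but by monotonicity its constraint has slack `-β a` coming from `C ∪ {a}`. Hence the
shifted allocation lies in `K(v, ε* - η)`, contradicting the minimality of `ε*`.
-/

/-- The strong ε-core of a coalitional game with value function `v`. -/
def eCore {α : Type*} [Fintype α] [DecidableEq α] (v : Finset α → ℝ) (ε : ℝ) :
    Set (α → ℝ) :=
  {β | ∑ a, β a = v Finset.univ ∧
    ∀ C : Finset α, C.Nonempty → C ≠ Finset.univ → v C - ε ≤ ∑ a ∈ C, β a}

section

variable {α : Type*} [Fintype α] [DecidableEq α] {v : Finset α → ℝ} {ε : ℝ} {β : α → ℝ}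

def shiftTo (β : α → ℝ) (a : α) (η : ℝ) : α → ℝ :=
  fun b => β b - η + if b = a then Fintype.card α * η else 0

lemma sum_shiftTo (a : α) (η : ℝ) (C : Finset α) :
    ∑ b ∈ C, shiftTo β a η b =
      ∑ b ∈ C, β b - C.card * η + if a ∈ C then Fintype.card α * η else 0 := by
  simp only [shiftTo, Finset.sum_add_distrib, Finset.sum_sub_distrib, Finset.sum_ite_eq',
    Finset.sum_const, nsmul_eq_mul]

lemma sub_le_sum_of_mem_eCore (hβ : β ∈ eCore v ε) (hε : 0 ≤ ε) {C : Finset α}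
    (hC : C.Nonempty) : v C - ε ≤ ∑ b ∈ C, β b := by
  by_cases hCuniv : C = Finset.univ
  · subst hCuniv
    linarith [hβ.1]
  · exact hβ.2 C hC hCuniv

lemma sub_le_sum_insert_of_mem_eCore (hβ : β ∈ eCore v ε) (hε : 0 ≤ ε) (hmono : Monotone v)
    (a : α) (C : Finset α) : v C - ε ≤ ∑ b ∈ insert a C, β b :=
  (sub_le_sub_right (hmono (Finset.subset_insert a C)) ε).trans
    (sub_le_sum_of_mem_eCore hβ hε (Finset.insert_nonempty a C))

lemma neg_le_of_mem_eCore (hβ : β ∈ eCore v ε) (hcard : 2 ≤ Fintype.card α) {a : α}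
    (hva : v {a} = 0) : -β a ≤ ε := by
  have hsingleton : ({a} : Finset α) ≠ Finset.univ := by
    intro h
    have := congrArg Finset.card h
    rw [Finset.card_singleton, Finset.card_univ] at this
    omega
  have := hβ.2 {a} (Finset.singleton_nonempty a) hsingleton
  rw [hva, Finset.sum_singleton] at this
  linarith

lemma shiftTo_mem_eCore (hβ : β ∈ eCore v ε) (hε : 0 ≤ ε) (hmono : Monotone v) {a : α} {η : ℝ}
    (hη : 0 ≤ η) (hηa : Fintype.card α * η ≤ -β a) : shiftTo β a η ∈ eCore v (ε - η) := by
  refine ⟨by simp [sum_shiftTo, hβ.1], fun C hC hCuniv => ?_⟩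
  have hcardC : (C.card : ℝ) + 1 ≤ Fintype.card α := by
    have := Finset.card_lt_card (Finset.ssubset_univ_iff.mpr hCuniv)
    rw [Finset.card_univ] at this
    exact_mod_cast this
  have hloss : ((C.card : ℝ) + 1) * η ≤ Fintype.card α * η :=
    mul_le_mul_of_nonneg_right hcardC hη
  rw [sum_shiftTo]
  by_cases haC : a ∈ C
  · rw [if_pos haC]
    linarith [hβ.2 C hC hCuniv]
  · rw [if_neg haC, add_zero]
    have hslack := sub_le_sum_insert_of_mem_eCore hβ hε hmono a C
    rw [Finset.sum_insert haC] at hslack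
    linarith

end

theorem stmt1_general {α : Type*} [Fintype α] [DecidableEq α]
    (v : Finset α → ℝ)
    (hcard : 2 ≤ Fintype.card α)
    (hmono : ∀ C' C : Finset α, C' ⊆ C → v C' ≤ v C)
    (hzero : ∀ C : Finset α, C.card ≤ 1 → v C = 0)
    (εstar : ℝ)
    (hleast : ∀ ε : ℝ, ε < εstar → eCore v ε = ∅) :
    ∀ β ∈ eCore v εstar, ∀ a : α, 0 ≤ β a := by
  intro β hβ a
  by_contra! hneg
  have hε : -β a ≤ εstar := neg_le_of_mem_eCore hβ hcard (hzero {a} (by simp))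
  have hn : (0 : ℝ) < Fintype.card α := by exact_mod_cast (by omega : 0 < Fintype.card α)
  set η := -β a / Fintype.card α
  have hη : 0 < η := div_pos (by linarith) hn
  have hshift : shiftTo β a η ∈ eCore v (εstar - η) :=
    shiftTo_mem_eCore hβ (by linarith) (fun _ _ h => hmono _ _ h) hη.le
      (by rw [mul_div_cancel₀ _ hn.ne'])
  rw [hleast _ (by linarith)] at hshift
  exact hshift

/-- For a nondecreasing coalitional value function, every allocation in the
least-core is componentwise nonnegative. -/
theorem stmt1 {α : Type*} [Fintype α] [DecidableEq α]
    (v : Finset α → ℝ)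
    (hcard : 2 ≤ Fintype.card α)
    (hmono : ∀ C' C : Finset α, C' ⊆ C → v C' ≤ v C)
    (hzero : ∀ C : Finset α, C.card ≤ 1 → v C = 0)
    (εstar : ℝ)
    (hne : (eCore v εstar).Nonempty)
    (hleast : ∀ ε : ℝ, ε < εstar → eCore v ε = ∅) :
    ∀ β ∈ eCore v εstar, ∀ a : α, 0 ≤ β a :=
  stmt1_general v hcard hmono hzero εstar hleast
end

section
/- Let A be a finite set of players with at least two elements and let v be a nondecreasing coalitional value function on A with v(C) = 0 whenever C has at most one element. Suppose ε ∈ ℝ and β ∈ K(v,ε) is an allocation with β_{a'} < 0 for some player a' ∈ A. Then there exists δ > 0 such that K(v, ε − δ) is nonempty. -/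
open Finset

def shiftExcept {α : Type*} [DecidableEq α] (β : α → ℝ) (a' : α) (t : ℝ) : α → ℝ :=
  Function.update (fun a => β a + t) a' 0

section

variable {α : Type*} [DecidableEq α] (β : α → ℝ) (a' : α) (t : ℝ)

lemma sum_shiftExcept_of_notMem {C : Finset α} (h : a' ∉ C) :
    ∑ a ∈ C, shiftExcept β a' t a = ∑ a ∈ C, β a + #C * t := by
  rw [shiftExcept, sum_update_of_notMem h, sum_add_distrib, sum_const, nsmul_eq_mul]

lemma sum_shiftExcept_of_mem {C : Finset α} (h : a' ∈ C) :
    ∑ a ∈ C, shiftExcept β a' t a + (β a' + t) = ∑ a ∈ C, β a + #C * t := by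
  rw [shiftExcept, sum_update_of_mem h, zero_add,
    ← sum_eq_sum_sdiff_singleton_add h (fun a => β a + t), sum_add_distrib, sum_const, nsmul_eq_mul]

end

lemma card_add_one_le_of_ne_univ {α : Type*} [Fintype α] {C : Finset α} (hC : C ≠ univ) :
    (#C : ℝ) + 1 ≤ Fintype.card α := by
  exact_mod_cast (card_lt_iff_ne_univ C).mpr hC

section

variable {α : Type*} [Fintype α] [DecidableEq α]

lemma neg_le_of_mem_eCore_s2 {v : Finset α → ℝ} {ε : ℝ} {β : α → ℝ} (hβ : β ∈ eCore v ε) {a' : α}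
    (hsingle : ({a'} : Finset α) ≠ univ) (hv : v {a'} = 0) : -β a' ≤ ε := by
  have := hβ.2 {a'} (singleton_nonempty a') hsingle
  rw [hv, sum_singleton] at this
  linarith

lemma shiftExcept_mem_eCore {v : Finset α → ℝ} (hmono : ∀ C' C : Finset α, C' ⊆ C → v C' ≤ v C)
    {ε : ℝ} {β : α → ℝ} (hβ : β ∈ eCore v ε) {a' : α} {t : ℝ} (ht : t ≤ 0)
    (hβt : β a' = (Fintype.card α - 1) * t) (htε : -t ≤ ε) :
    shiftExcept β a' t ∈ eCore v (ε + t) := by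
  obtain ⟨hsum, hcons⟩ := hβ
  have hle_card_mul : ∀ C : Finset α, C ≠ univ → β a' ≤ #C * t := fun C hC => by
    rw [hβt]
    exact mul_le_mul_of_nonpos_right (by linarith [card_add_one_le_of_ne_univ hC]) ht
  refine ⟨?_, fun C hC hCne => ?_⟩
  · have := sum_shiftExcept_of_mem β a' t (mem_univ a')
    rw [card_univ] at this
    linarith
  by_cases hmem : a' ∈ C
  · have := sum_shiftExcept_of_mem β a' t hmem
    linarith [hcons C hC hCne, hle_card_mul C hCne]
  rw [sum_shiftExcept_of_notMem β a' t hmem]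
  have hβ_insert : ∑ a ∈ insert a' C, β a = β a' + ∑ a ∈ C, β a := sum_insert hmem
  by_cases hins : insert a' C = univ
  · rw [hins, hsum] at hβ_insert
    linarith [hmono C univ (subset_univ C), hle_card_mul C hCne]
  · have hcard := hle_card_mul _ hins
    rw [card_insert_of_notMem hmem] at hcard
    push_cast at hcard
    linarith [hmono C _ (subset_insert a' C), hcons _ (insert_nonempty a' C) hins]

end

/-- For a nondecreasing coalitional value function, if some allocation in the
strong ε-core gives a negative benefit to a player, then the strong (ε-δ)-core
is nonempty for some δ > 0. -/
theorem stmt2 {α : Type*} [Fintype α] [DecidableEq α]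
    (v : Finset α → ℝ)
    (hcard : 2 ≤ Fintype.card α)
    (hmono : ∀ C' C : Finset α, C' ⊆ C → v C' ≤ v C)
    (hzero : ∀ C : Finset α, C.card ≤ 1 → v C = 0)
    (ε : ℝ) (β : α → ℝ) (hβ : β ∈ eCore v ε)
    (a' : α) (hneg : β a' < 0) :
    ∃ δ : ℝ, 0 < δ ∧ (eCore v (ε - δ)).Nonempty := by
  have hn : (1 : ℝ) ≤ Fintype.card α - 1 := by
    have : (2 : ℝ) ≤ Fintype.card α := by exact_mod_cast hcard
    linarith
  set t := β a' / (Fintype.card α - 1)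
  have ht : t < 0 := div_neg_of_neg_of_pos hneg (by linarith)
  have hβt : β a' = (Fintype.card α - 1) * t := by
    rw [mul_div_cancel₀ _ (by linarith)]
  have hsingle : ({a'} : Finset α) ≠ univ := fun h => by
    have := congrArg Finset.card h
    rw [card_singleton, card_univ] at this
    omega
  have hε : -β a' ≤ ε := neg_le_of_mem_eCore_s2 hβ hsingle (hzero _ (card_singleton a').le)
  have htε : -t ≤ ε := by
    linarith [mul_le_mul_of_nonpos_right hn ht.le]
  refine ⟨-t, neg_pos.mpr ht, shiftExcept β a' t, ?_⟩
  rw [sub_neg_eq_add]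
  exact shiftExcept_mem_eCore hmono hβ ht.le hβt htε
end

section
/- Let A be a finite set of players with at least two elements and let v be a coalitional value function on A with v(C) = 0 whenever C has at most one element. Suppose a' ∈ A is a dummy player (v(C) = v(C \ {a'}) for every C ⊆ A), ε > 0, and β ∈ K(v,ε) satisfies β_{a'} > 0. Then there exists δ > 0 such that K(v, ε − δ) is nonempty. -/
namespace eCore

variable {α : Type*} [DecidableEq α]

def redistribute (β : α → ℝ) (a' : α) (t : ℝ) : α → ℝ :=
  fun a => if a = a' then 0 else β a + t

@[simp]
theorem redistribute_self (β : α → ℝ) (a' : α) (t : ℝ) : redistribute β a' t a' = 0 :=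
  if_pos rfl

theorem redistribute_of_ne {β : α → ℝ} {a a' : α} {t : ℝ} (h : a ≠ a') :
    redistribute β a' t a = β a + t :=
  if_neg h

theorem sum_redistribute (β : α → ℝ) (a' : α) (t : ℝ) (C : Finset α) :
    ∑ a ∈ C, redistribute β a' t a = ∑ a ∈ C.erase a', β a + (C.erase a').card * t := by
  have h_erase : ∑ a ∈ C, redistribute β a' t a = ∑ a ∈ C.erase a', redistribute β a' t a := by
    by_cases ha' : a' ∈ C
    · rw [← Finset.sum_erase_add C _ ha', redistribute_self, add_zero]
    · rw [Finset.erase_eq_of_notMem ha']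
  rw [h_erase, Finset.sum_congr rfl fun a ha => redistribute_of_ne (Finset.ne_of_mem_erase ha),
    Finset.sum_add_distrib, Finset.sum_const, nsmul_eq_mul]

theorem sum_univ_redistribute [Fintype α] (hcard : 2 ≤ Fintype.card α) (β : α → ℝ) (a' : α) :
    ∑ a, redistribute β a' (β a' / (Fintype.card α - 1)) a = ∑ a, β a := by
  have hcard_erase : ((Finset.univ.erase a').card : ℝ) = Fintype.card α - 1 := by
    rw [Finset.card_erase_of_mem (Finset.mem_univ a'), Finset.card_univ,
      Nat.cast_sub (by omega), Nat.cast_one]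
  have hne : (Fintype.card α - 1 : ℝ) ≠ 0 := by
    rw [sub_ne_zero]
    exact_mod_cast (by omega : Fintype.card α ≠ 1)
  rw [sum_redistribute, hcard_erase, mul_div_cancel₀ _ hne,
    Finset.sum_erase_add _ _ (Finset.mem_univ a')]

theorem le_sum_redistribute [Fintype α] {v : Finset α → ℝ} {ε δ t : ℝ} {β : α → ℝ} {a' : α}
    (hβ : β ∈ eCore v ε) (hdum : ∀ C : Finset α, v C = v (C.erase a')) (hv : v {a'} = 0)
    (ht : 0 ≤ t) (hδt : δ ≤ t) (hδε : δ ≤ ε)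
    {C : Finset α} (hC : C.Nonempty) (hCuniv : C ≠ Finset.univ) :
    v C - (ε - δ) ≤ ∑ a ∈ C, redistribute β a' t a := by
  rw [sum_redistribute]
  by_cases hCa' : C = {a'}
  · subst hCa'
    simp [hv, hδε]
  have hD : (C.erase a').Nonempty := by
    rw [Finset.nonempty_iff_ne_empty, Ne, Finset.erase_eq_empty_iff]
    exact not_or.mpr ⟨hC.ne_empty, hCa'⟩
  have hDuniv : C.erase a' ≠ Finset.univ := fun h =>
    Finset.notMem_erase a' C (h ▸ Finset.mem_univ a')
  have hδ_le : δ ≤ (C.erase a').card * t :=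
    hδt.trans (le_mul_of_one_le_left ht (by exact_mod_cast hD.card_pos))
  have hβD := hβ.2 _ hD hDuniv
  rw [hdum C]
  linarith

end eCore

/-- If ε > 0 and an allocation in the strong ε-core gives strictly positive
benefit to a dummy player, then the strong (ε-δ)-core is nonempty for
some δ > 0. -/
theorem stmt5 {α : Type*} [Fintype α] [DecidableEq α]
    (v : Finset α → ℝ)
    (hcard : 2 ≤ Fintype.card α)
    (hzero : ∀ C : Finset α, C.card ≤ 1 → v C = 0)
    (a' : α) (hdum : ∀ C : Finset α, v C = v (C.erase a'))
    (ε : ℝ) (hε : 0 < ε)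
    (β : α → ℝ) (hβ : β ∈ eCore v ε) (hpos : 0 < β a') :
    ∃ δ : ℝ, 0 < δ ∧ (eCore v (ε - δ)).Nonempty := by
  set t := β a' / (Fintype.card α - 1 : ℝ)
  have ht : 0 < t := div_pos hpos (by
    rw [sub_pos]
    exact_mod_cast hcard)
  refine ⟨min t ε, lt_min ht hε, eCore.redistribute β a' t, ?_, ?_⟩
  · rw [eCore.sum_univ_redistribute hcard, hβ.1]
  · intro C hC hCuniv
    exact eCore.le_sum_redistribute hβ hdum (hzero _ (by simp)) ht.le
      (min_le_left _ _) (min_le_right _ _) hC hCuniv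
end

section
/- Let A be a finite set of players with at least two elements and let v be a coalitional value function on A with v(C) = 0 whenever C has at most one element. Suppose a' ∈ A is a dummy player (v(C) = v(C \ {a'}) for every C ⊆ A), ε > 0, and β ∈ K(v,ε) satisfies β_{a'} < 0. Then there exists δ > 0 such that K(v, ε − δ) is nonempty. -/
section

open Finset

variable {α : Type*} [Fintype α] [DecidableEq α] {v : Finset α → ℝ}

def IsDummy (v : Finset α → ℝ) (a' : α) : Prop :=
  ∀ C : Finset α, v C = v (C.erase a')

namespace eCore

theorem sub_le_sum_of_notMem_of_isDummy {ε : ℝ} (hε : 0 ≤ ε) {β : α → ℝ} (hβ : β ∈ eCore v ε)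
    {a' : α} (hdum : IsDummy v a') {C : Finset α} (ha' : a' ∉ C) :
    v C - ε - β a' ≤ ∑ a ∈ C, β a := by
  obtain ⟨hsum, hcore⟩ := hβ
  have hv : v (insert a' C) = v C := by rw [hdum, erase_insert ha']
  have hsum_insert : ∑ a ∈ insert a' C, β a = β a' + ∑ a ∈ C, β a := sum_insert ha'
  by_cases hfull : insert a' C = univ
  · rw [hfull] at hv hsum_insert
    linarith
  · have := hcore (insert a' C) (insert_nonempty a' C) hfull
    linarith

def transfer (β : α → ℝ) (a' : α) (δ : ℝ) : α → ℝ :=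
  fun a => β a - δ + if a = a' then Fintype.card α * δ else 0

theorem sum_transfer (β : α → ℝ) (a' : α) (δ : ℝ) (C : Finset α) :
    ∑ a ∈ C, transfer β a' δ a =
      ∑ a ∈ C, β a - C.card * δ + if a' ∈ C then Fintype.card α * δ else 0 := by
  simp only [transfer, sum_add_distrib, sum_sub_distrib, sum_const, nsmul_eq_mul, sum_ite_eq']

theorem transfer_mem {ε δ : ℝ} (hε : 0 ≤ ε) (hδ : 0 ≤ δ) {β : α → ℝ} (hβ : β ∈ eCore v ε)
    {a' : α} (hdum : IsDummy v a') (hδβ : Fintype.card α * δ ≤ -β a') :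
    transfer β a' δ ∈ eCore v (ε - δ) := by
  refine ⟨?_, fun C hC hCA => ?_⟩
  · rw [sum_transfer, hβ.1, card_univ, if_pos (mem_univ a')]
    ring
  · have hcard : (C.card : ℝ) + 1 ≤ Fintype.card α := by
      exact_mod_cast (card_lt_iff_ne_univ C).mpr hCA
    rw [sum_transfer]
    by_cases ha' : a' ∈ C
    · rw [if_pos ha']
      have := hβ.2 C hC hCA
      nlinarith
    · rw [if_neg ha']
      have := sub_le_sum_of_notMem_of_isDummy hε hβ hdum ha'
      nlinarith

end eCore

end

theorem stmt6_general {α : Type*} [Fintype α] [DecidableEq α]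
    (v : Finset α → ℝ)
    (a' : α) (hdum : ∀ C : Finset α, v C = v (C.erase a'))
    (ε : ℝ) (hε : 0 < ε)
    (β : α → ℝ) (hβ : β ∈ eCore v ε) (hneg : β a' < 0) :
    ∃ δ : ℝ, 0 < δ ∧ (eCore v (ε - δ)).Nonempty := by
  have hn : (0 : ℝ) < Fintype.card α := by
    exact_mod_cast Fintype.card_pos_iff.mpr ⟨a'⟩
  have hδ : 0 < -β a' / Fintype.card α := div_pos (neg_pos.mpr hneg) hn
  refine ⟨_, hδ, eCore.transfer β a' _, eCore.transfer_mem hε.le hδ.le hβ hdum ?_⟩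
  rw [mul_div_cancel₀ _ hn.ne']

/-- If ε > 0 and an allocation in the strong ε-core gives strictly negative
benefit to a dummy player, then the strong (ε-δ)-core is nonempty for
some δ > 0. -/
theorem stmt6 {α : Type*} [Fintype α] [DecidableEq α]
    (v : Finset α → ℝ)
    (hcard : 2 ≤ Fintype.card α)
    (hzero : ∀ C : Finset α, C.card ≤ 1 → v C = 0)
    (a' : α) (hdum : ∀ C : Finset α, v C = v (C.erase a'))
    (ε : ℝ) (hε : 0 < ε)
    (β : α → ℝ) (hβ : β ∈ eCore v ε) (hneg : β a' < 0) :
    ∃ δ : ℝ, 0 < δ ∧ (eCore v (ε - δ)).Nonempty :=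
  stmt6_general v a' hdum ε hε β hβ hneg
end

section
/- Let A be a finite set of players with at least two elements and let v be a coalitional value function on A with v(C) = 0 whenever C has at most one element. Then the set E = {ε ∈ ℝ | K(v,ε) ≠ ∅} is nonempty and bounded below, and it has a minimum element ε*(v); consequently the least-core K(v, ε*(v)) is well-defined and nonempty. -/
open Finset

section eCore

variable {α : Type*} [Fintype α] [DecidableEq α]

theorem exists_eCore_nonempty [Nonempty α] (v : Finset α → ℝ) :
    ∃ ε, (eCore v ε).Nonempty := by
  obtain ⟨a₀⟩ := ‹Nonempty α›
  set β : α → ℝ := Pi.single a₀ (v univ)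
  obtain ⟨ε, hε⟩ := (Set.finite_range fun C : Finset α => v C - ∑ a ∈ C, β a).bddAbove
  refine ⟨ε, β, by simp [β], fun C _ _ => ?_⟩
  linarith [hε (Set.mem_range_self C)]

theorem isClosed_setOf_mem_eCore (v : Finset α → ℝ) :
    IsClosed {p : (α → ℝ) × ℝ | p.1 ∈ eCore v p.2} := by
  have hsum (C : Finset α) : Continuous fun p : (α → ℝ) × ℝ => ∑ a ∈ C, p.1 a := by
    fun_prop
  have hcore : {p : (α → ℝ) × ℝ | p.1 ∈ eCore v p.2} =
      {p | ∑ a, p.1 a = v univ} ∩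
        ⋂ (C : Finset α) (_ : C.Nonempty) (_ : C ≠ univ),
          {p | v C - p.2 ≤ ∑ a ∈ C, p.1 a} := by
    ext p
    simp [eCore]
  rw [hcore]
  exact (isClosed_eq (hsum univ) continuous_const).inter <|
    isClosed_iInter fun C => isClosed_iInter fun _ => isClosed_iInter fun _ =>
      isClosed_le (by fun_prop) (hsum C)

variable [Nontrivial α] {ε : ℝ} {β : α → ℝ}

theorem sub_le_apply_of_mem_eCore {v : Finset α → ℝ} (hβ : β ∈ eCore v ε) (a : α) :
    v {a} - ε ≤ β a := by
  simpa using hβ.2 {a} (singleton_nonempty a) (singleton_ne_univ a)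

theorem apply_le_add_of_mem_eCore {v : Finset α → ℝ} (hβ : β ∈ eCore v ε) (a : α) :
    β a ≤ v univ - v (univ.erase a) + ε := by
  have hcompl := hβ.2 (univ.erase a) ((erase_nonempty (mem_univ a)).2 univ_nontrivial)
    (erase_ne_self.2 (mem_univ a))
  have hsplit := add_sum_erase univ β (mem_univ a)
  linarith [hβ.1]

theorem bddBelow_setOf_eCore_nonempty (v : Finset α → ℝ) :
    BddBelow {ε | (eCore v ε).Nonempty} := by
  obtain ⟨a⟩ := ‹Nontrivial α›.to_nonempty
  refine ⟨(v {a} + v (univ.erase a) - v univ) / 2, fun ε ⟨β, hβ⟩ => ?_⟩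
  linarith [sub_le_apply_of_mem_eCore hβ a, apply_le_add_of_mem_eCore hβ a]

theorem isCompact_setOf_mem_eCore_of_mem_Icc (v : Finset α → ℝ) (lo hi : ℝ) :
    IsCompact {p : (α → ℝ) × ℝ | p.1 ∈ eCore v p.2 ∧ p.2 ∈ Set.Icc lo hi} := by
  have hbox : IsCompact ((Set.univ.pi fun a =>
      Set.Icc (v {a} - hi) (v univ - v (univ.erase a) + hi)) ×ˢ Set.Icc lo hi) :=
    (isCompact_univ_pi fun _ => isCompact_Icc).prod isCompact_Icc
  refine hbox.of_isClosed_subset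
    ((isClosed_setOf_mem_eCore v).inter (isClosed_Icc.preimage continuous_snd)) ?_
  rintro ⟨β, ε⟩ ⟨hβ, hlo, hhi⟩
  refine ⟨fun a _ => ⟨?_, ?_⟩, hlo, hhi⟩
  · linarith [sub_le_apply_of_mem_eCore hβ a]
  · linarith [apply_le_add_of_mem_eCore hβ a]

theorem exists_isLeast_setOf_eCore_nonempty (v : Finset α → ℝ) :
    ∃ ε, IsLeast {ε | (eCore v ε).Nonempty} ε := by
  obtain ⟨ε₀, β₀, hβ₀⟩ := exists_eCore_nonempty v
  obtain ⟨lo, hlo⟩ := bddBelow_setOf_eCore_nonempty v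
  obtain ⟨p, hp, hmin⟩ := (isCompact_setOf_mem_eCore_of_mem_Icc v lo ε₀).exists_isMinOn
    ⟨(β₀, ε₀), hβ₀, hlo ⟨β₀, hβ₀⟩, le_rfl⟩ continuous_snd.continuousOn
  refine ⟨p.2, ⟨p.1, hp.1⟩, fun ε ⟨β, hβ⟩ => ?_⟩
  by_cases hε : ε ≤ ε₀
  · exact hmin (a := (β, ε)) ⟨hβ, hlo ⟨β, hβ⟩, hε⟩
  · linarith [hp.2.2]

end eCore

theorem stmt10_general {α : Type*} [Fintype α] [DecidableEq α]
    (v : Finset α → ℝ)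
    (hcard : 2 ≤ Fintype.card α) :
    ({ε : ℝ | (eCore v ε).Nonempty}).Nonempty ∧
      BddBelow {ε : ℝ | (eCore v ε).Nonempty} ∧
      ∃ εstar : ℝ, IsLeast {ε : ℝ | (eCore v ε).Nonempty} εstar ∧
        (eCore v εstar).Nonempty := by
  have : Nontrivial α := Fintype.one_lt_card_iff_nontrivial.mp hcard
  obtain ⟨ε, hε⟩ := exists_isLeast_setOf_eCore_nonempty v
  exact ⟨⟨ε, hε.1⟩, hε.bddBelow, ε, hε, hε.1⟩

/-- The set of ε for which the strong ε-core is nonempty is nonempty, bounded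
below, and has a minimum element ε*; hence the least-core is well-defined and
nonempty. -/
theorem stmt10 {α : Type*} [Fintype α] [DecidableEq α]
    (v : Finset α → ℝ)
    (hcard : 2 ≤ Fintype.card α)
    (hzero : ∀ C : Finset α, C.card ≤ 1 → v C = 0) :
    ({ε : ℝ | (eCore v ε).Nonempty}).Nonempty ∧
      BddBelow {ε : ℝ | (eCore v ε).Nonempty} ∧
      ∃ εstar : ℝ, IsLeast {ε : ℝ | (eCore v ε).Nonempty} εstar ∧
        (eCore v εstar).Nonempty :=
  stmt10_general v hcard
end

section
/- Let A be a finite set of players, v a coalitional value function on A with v(C) = 0 whenever C has at most one element, F a family of nonempty proper subsets of A, ε^k ≥ 0, and β^c : A → ℝ a reference allocation. Suppose β^k : A → ℝ satisfies v(C) − Σ_{a∈C} β^k_a ≤ ε^k for every subset C ⊆ A, and β^k minimizes Σ_{a∈A} (β_a − β^c_a)² over all β with β ≥ 0 componentwise, Σ_{a∈A} β_a = v(A), and Σ_{a∈C} β_a ≥ v(C) − ε^k for all C ∈ F. Then β^k also minimizes Σ_{a∈A} (β_a − β^c_a)² over the full feasible set of all β with β ≥ 0 componentwise, Σ_{a∈A}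 β_a = v(A), and Σ_{a∈C} β_a ≥ v(C) − ε^k for every nonempty proper subset C ⊊ A. -/
theorem stmt15_general {α : Type*} [Fintype α]
    (v : Finset α → ℝ)
    (F : Set (Finset α))
    (hF : ∀ C ∈ F, C.Nonempty ∧ C ≠ Finset.univ)
    (εk : ℝ)
    (βc βk : α → ℝ)
    (hexc : ∀ C : Finset α, v C - ∑ a ∈ C, βk a ≤ εk)
    (hfeasR : (∀ a, 0 ≤ βk a) ∧ ∑ a, βk a = v Finset.univ ∧
      ∀ C ∈ F, v C - εk ≤ ∑ a ∈ C, βk a)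
    (hoptR : ∀ β : α → ℝ,
      ((∀ a, 0 ≤ β a) ∧ ∑ a, β a = v Finset.univ ∧
        ∀ C ∈ F, v C - εk ≤ ∑ a ∈ C, β a) →
      ∑ a, (βk a - βc a) ^ 2 ≤ ∑ a, (β a - βc a) ^ 2) :
    ((∀ a, 0 ≤ βk a) ∧ ∑ a, βk a = v Finset.univ ∧
      ∀ C : Finset α, C.Nonempty → C ≠ Finset.univ →
        v C - εk ≤ ∑ a ∈ C, βk a) ∧
    ∀ β : α → ℝ,
      ((∀ a, 0 ≤ β a) ∧ ∑ a, β a = v Finset.univ ∧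
        ∀ C : Finset α, C.Nonempty → C ≠ Finset.univ →
          v C - εk ≤ ∑ a ∈ C, β a) →
      ∑ a, (βk a - βc a) ^ 2 ≤ ∑ a, (β a - βc a) ^ 2 := by
  obtain ⟨hnonneg, hbudget, -⟩ := hfeasR
  refine ⟨⟨hnonneg, hbudget, fun C _ _ => by linarith [hexc C]⟩, ?_⟩
  rintro β ⟨hβ_nonneg, hβ_budget, hβ_core⟩
  exact hoptR β ⟨hβ_nonneg, hβ_budget, fun C hC => hβ_core C (hF C hC).1 (hF C hC).2⟩

/-- Tie-breaking correctness of the constraint generation algorithm: if β^k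
minimizes the squared distance to the reference allocation β^c over the
relaxed feasible set determined by the generated family F, and no coalition
has excess exceeding ε^k at β^k, then β^k also minimizes the squared distance
to β^c over the full feasible set (the nonnegative strong ε^k-core). -/
theorem stmt15 {α : Type*} [Fintype α] [DecidableEq α]
    (v : Finset α → ℝ)
    (hzero : ∀ C : Finset α, C.card ≤ 1 → v C = 0)
    (F : Set (Finset α))
    (hF : ∀ C ∈ F, C.Nonempty ∧ C ≠ Finset.univ)
    (εk : ℝ) (hεk : 0 ≤ εk)
    (βc βk : α → ℝ)
    (hexc : ∀ C : Finset α, v C - ∑ a ∈ C, βk a ≤ εk)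
    (hfeasR : (∀ a, 0 ≤ βk a) ∧ ∑ a, βk a = v Finset.univ ∧
      ∀ C ∈ F, v C - εk ≤ ∑ a ∈ C, βk a)
    (hoptR : ∀ β : α → ℝ,
      ((∀ a, 0 ≤ β a) ∧ ∑ a, β a = v Finset.univ ∧
        ∀ C ∈ F, v C - εk ≤ ∑ a ∈ C, β a) →
      ∑ a, (βk a - βc a) ^ 2 ≤ ∑ a, (β a - βc a) ^ 2) :
    ((∀ a, 0 ≤ βk a) ∧ ∑ a, βk a = v Finset.univ ∧
      ∀ C : Finset α, C.Nonempty → C ≠ Finset.univ →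
        v C - εk ≤ ∑ a ∈ C, βk a) ∧
    ∀ β : α → ℝ,
      ((∀ a, 0 ≤ β a) ∧ ∑ a, β a = v Finset.univ ∧
        ∀ C : Finset α, C.Nonempty → C ≠ Finset.univ →
          v C - εk ≤ ∑ a ∈ C, β a) →
      ∑ a, (βk a - βc a) ^ 2 ≤ ∑ a, (β a - βc a) ^ 2 :=
  stmt15_general v F hF εk βc βk hexc hfeasR hoptR
end

section
/- Let A be a finite set of players and S a finite set of scenarios with probabilities π_s ≥ 0 summing to 1. For each s ∈ S let v^s be a coalitional value function on A, and define the expected coalitional value function v̄(C) = Σ_{s∈S} π_s v^s(C) for all C ⊆ A; assume v̄(A) ≠ 0. Let β : A → ℝ be efficient for v̄, i.e., Σ_{a∈A} β_a = v̄(A), and define the scenario-specific allocation β^s_a = (β_a / v̄(A)) · v^s(A). Then: (i) Σ_{a∈A} β^s_a = v^s(A) for every scenario s (budget balance in every scenario); (ii) Σ_{s∈S} π_s β^s_a = β_a for every player a (the expected scenario-specific benefit equals the original benefit); and (iii) if additionally β lies in the strong ε-core K(v̄, ε), then for every nonempty proper subset C ⊊ A the expected excess satisfies Σ_{s∈S}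 π_s (v^s(C) − Σ_{a∈C} β^s_a) ≤ ε. -/
/-!
Every scenario allocation hands player `a` the same share `β a / v̄(A)` of that scenario's
grand-coalition value. Since the shares sum to one, each scenario is budget balanced; since
`v̄(A)` is the expectation of `v^s(A)`, the expected allocation is `β`. By linearity the expected
excess of a coalition is then its excess under `β` in the expected game, which the core bounds.
-/

open Finset

section Allocation

variable {α σ : Type*} [Fintype σ]

theorem sum_div_mul_of_sum_eq [Fintype α] {β : α → ℝ} {t : ℝ} (hβ : ∑ a, β a = t) (ht : t ≠ 0)
    (x : ℝ) :
    ∑ a, β a / t * x = x := by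
  rw [← sum_mul, ← sum_div, hβ, div_self ht, one_mul]

theorem sum_mul_div_sum_mul_mul (π w : σ → ℝ) (hw : ∑ s, π s * w s ≠ 0) (b : ℝ) :
    ∑ s, π s * ((b / ∑ s, π s * w s) * w s) = b := by
  simp_rw [mul_left_comm (π _)]
  rw [← mul_sum, div_mul_cancel₀ b hw]

theorem sum_mul_sub_sum_eq (π : σ → ℝ) (v : σ → Finset α → ℝ) (βs : σ → α → ℝ)
    (C : Finset α) :
    ∑ s, π s * (v s C - ∑ a ∈ C, βs s a) =
      ∑ s, π s * v s C - ∑ a ∈ C, ∑ s, π s * βs s a := by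
  simp_rw [mul_sub, mul_sum, sum_sub_distrib]
  rw [sum_comm]

end Allocation

theorem stmt16_general {α σ : Type*} [Fintype α] [DecidableEq α] [Fintype σ]
    (π : σ → ℝ)
    (v : σ → Finset α → ℝ)
    (vbar : Finset α → ℝ)
    (hvbar : ∀ C : Finset α, vbar C = ∑ s, π s * v s C)
    (hvbarA : vbar Finset.univ ≠ 0)
    (β : α → ℝ) (heff : ∑ a, β a = vbar Finset.univ)
    (βs : σ → α → ℝ)
    (hβs : ∀ s a, βs s a = β a / vbar Finset.univ * v s Finset.univ) :
    (∀ s, ∑ a, βs s a = v s Finset.univ) ∧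
    (∀ a, ∑ s, π s * βs s a = β a) ∧
    (∀ ε : ℝ, β ∈ eCore vbar ε →
      ∀ C : Finset α, C.Nonempty → C ≠ Finset.univ →
        ∑ s, π s * (v s C - ∑ a ∈ C, βs s a) ≤ ε) := by
  obtain rfl : βs = fun s a => β a / vbar univ * v s univ := funext₂ hβs
  have hexpected (a : α) : ∑ s, π s * (β a / vbar univ * v s univ) = β a := by
    rw [hvbar] at hvbarA ⊢
    exact sum_mul_div_sum_mul_mul π (v · univ) hvbarA (β a)
  refine ⟨fun s => sum_div_mul_of_sum_eq heff hvbarA _, hexpected, ?_⟩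
  intro ε hcore C hC hCA
  rw [sum_mul_sub_sum_eq, ← hvbar, sum_congr rfl fun a _ => hexpected a]
  linarith [hcore.2 C hC hCA]

/-- Scenario-specific benefit allocations derived from an efficient allocation
for the expected coalitional value function: (i) budget balance in every
scenario, (ii) the expected scenario-specific benefit equals the original
benefit, and (iii) if the original allocation lies in the strong ε-core of the
expected game, the expected excess of every nonempty proper coalition is at
most ε. -/
theorem stmt16 {α σ : Type*} [Fintype α] [DecidableEq α] [Fintype σ]
    (π : σ → ℝ) (hπ : ∀ s, 0 ≤ π s) (hπ1 : ∑ s, π s = 1)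
    (v : σ → Finset α → ℝ)
    (vbar : Finset α → ℝ)
    (hvbar : ∀ C : Finset α, vbar C = ∑ s, π s * v s C)
    (hvbarA : vbar Finset.univ ≠ 0)
    (β : α → ℝ) (heff : ∑ a, β a = vbar Finset.univ)
    (βs : σ → α → ℝ)
    (hβs : ∀ s a, βs s a = β a / vbar Finset.univ * v s Finset.univ) :
    (∀ s, ∑ a, βs s a = v s Finset.univ) ∧
    (∀ a, ∑ s, π s * βs s a = β a) ∧
    (∀ ε : ℝ, β ∈ eCore vbar ε →
      ∀ C : Finset α, C.Nonempty → C ≠ Finset.univ →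
        ∑ s, π s * (v s C - ∑ a ∈ C, βs s a) ≤ ε) :=
  stmt16_general π v vbar hvbar hvbarA β heff βs hβs
end

section
/- Let A be a finite set of players and v a coalitional value function on A. Suppose two players a, b ∈ A are symmetric, i.e., v(C ∪ {a}) = v(C ∪ {b}) for every subset C ⊆ A \ {a, b}, and suppose the strong ε-core K(v,ε) is nonempty for some ε ∈ ℝ. Then there exists an allocation β ∈ K(v,ε) with β_a = β_b. -/
open Finset

section

variable {α : Type*} [DecidableEq α]

theorem convex_eCore [Fintype α] (v : Finset α → ℝ) (ε : ℝ) : Convex ℝ (eCore v ε) := by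
  rintro β ⟨hβ_sum, hβ⟩ γ ⟨hγ_sum, hγ⟩ s t hs ht hst
  refine ⟨?_, fun C hC hC_univ => ?_⟩
  · simp only [Pi.add_apply, Pi.smul_apply, smul_eq_mul, sum_add_distrib, ← mul_sum,
      hβ_sum, hγ_sum]
    rw [← add_mul, hst, one_mul]
  · simp only [Pi.add_apply, Pi.smul_apply, smul_eq_mul, sum_add_distrib, ← mul_sum]
    calc v C - ε = s * (v C - ε) + t * (v C - ε) := by rw [← add_mul, hst, one_mul]
      _ ≤ _ := add_le_add (mul_le_mul_of_nonneg_left (hβ C hC hC_univ) hs)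
          (mul_le_mul_of_nonneg_left (hγ C hC hC_univ) ht)

theorem comp_perm_mem_eCore [Fintype α] {v : Finset α → ℝ} {ε : ℝ} {σ : Equiv.Perm α}
    (hσ : ∀ C, v (C.map σ.toEmbedding) = v C) {β : α → ℝ} (hβ : β ∈ eCore v ε) :
    β ∘ σ ∈ eCore v ε := by
  obtain ⟨hβ_sum, hβ⟩ := hβ
  refine ⟨by rwa [Function.comp_def, Equiv.sum_comp σ β], fun C hC hC_univ => ?_⟩
  have hσC_univ : C.map σ.toEmbedding ≠ univ := by
    rwa [← map_univ_equiv σ, Ne, map_inj]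
  calc v C - ε = v (C.map σ.toEmbedding) - ε := by rw [hσ]
    _ ≤ ∑ x ∈ C.map σ.toEmbedding, β x := hβ _ hC.map hσC_univ
    _ = ∑ x ∈ C, (β ∘ σ) x := sum_map _ _ _

theorem map_swap_eq_self {a b : α} {C : Finset α} (h : a ∈ C ↔ b ∈ C) :
    C.map (Equiv.swap a b).toEmbedding = C := by
  ext x
  rw [mem_map_equiv, Equiv.symm_swap, Equiv.swap_apply_def]
  split_ifs with hxa hxb
  · subst hxa; exact h.symm
  · subst hxb; exact h
  · rfl

theorem map_swap_insert_of_notMem {a b : α} {D : Finset α} (ha : a ∉ D) (hb : b ∉ D) :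
    (insert a D).map (Equiv.swap a b).toEmbedding = insert b D := by
  rw [map_insert, Equiv.toEmbedding_apply, Equiv.swap_apply_left,
    map_swap_eq_self (iff_of_false ha hb)]

def IsSymmetricPair {M : Type*} (v : Finset α → M) (a b : α) : Prop :=
  ∀ C : Finset α, a ∉ C → b ∉ C → v (insert a C) = v (insert b C)

namespace IsSymmetricPair

variable {M : Type*} {v : Finset α → M} {a b : α}

theorem symm (h : IsSymmetricPair v a b) : IsSymmetricPair v b a :=
  fun C hb ha => (h C ha hb).symm

theorem value_map_swap_of_mem_of_notMem (h : IsSymmetricPair v a b) {C : Finset α}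
    (ha : a ∈ C) (hb : b ∉ C) : v (C.map (Equiv.swap a b).toEmbedding) = v C := by
  have hb' : b ∉ C.erase a := fun hb' => hb (mem_of_mem_erase hb')
  conv_lhs => rw [← insert_erase ha, map_swap_insert_of_notMem (notMem_erase a C) hb']
  rw [← h _ (notMem_erase a C) hb', insert_erase ha]

theorem value_map_swap (h : IsSymmetricPair v a b) (C : Finset α) :
    v (C.map (Equiv.swap a b).toEmbedding) = v C := by
  by_cases hab : a ∈ C ↔ b ∈ C
  · rw [map_swap_eq_self hab]
  by_cases ha : a ∈ C
  · exact h.value_map_swap_of_mem_of_notMem ha (fun hb => hab (iff_of_true ha hb))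
  · have hb : b ∈ C := by tauto
    rw [Equiv.swap_comm]
    exact h.symm.value_map_swap_of_mem_of_notMem hb ha

end IsSymmetricPair

end

/-- If two players are symmetric and the strong ε-core is nonempty, then it
contains an allocation assigning them equal benefits. -/
theorem stmt18 {α : Type*} [Fintype α] [DecidableEq α]
    (v : Finset α → ℝ)
    (a b : α)
    (hsym : ∀ C : Finset α, a ∉ C → b ∉ C → v (insert a C) = v (insert b C))
    (ε : ℝ) (hne : (eCore v ε).Nonempty) :
    ∃ β ∈ eCore v ε, β a = β b := by
  obtain ⟨β, hβ⟩ := hne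
  have hβ_swap : β ∘ Equiv.swap a b ∈ eCore v ε :=
    comp_perm_mem_eCore (IsSymmetricPair.value_map_swap hsym) hβ
  refine ⟨(1 / 2 : ℝ) • β + (1 / 2 : ℝ) • (β ∘ Equiv.swap a b),
    convex_eCore v ε hβ hβ_swap (by norm_num) (by norm_num) (by norm_num), ?_⟩
  simp only [Pi.add_apply, Pi.smul_apply, Function.comp_apply, Equiv.swap_apply_left,
    Equiv.swap_apply_right]
  ring
end
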